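/- Let r be a ground DLP rule a₁ ∨ … ∨ a_k ← a_{k+1}, …, a_m, not a_{m+1}, …, not a_n and let r′ be its DHPP₁^PA translation a₁:[1,1] ∨ … ∨ a_k:[1,1] ← a_{k+1}:[1,1], …, a_m:[1,1], not a_{m+1}:[1,1], …, not a_n:[1,1]. For I ⊆ B_L, let h_I be the p-interpretation with h_I(a) = [1,1] if a ∈ I and h_I(a) = [0,0] if a ∈ B_L \ I. Then: h_I satisfies the body of r′ if and only if I satisfies the body of r (i.e. {a_{k+1},…,a_m} ⊆ I and {a_{m+1},…,a_n} ∩ I = ∅); h_I satisfies the head of r′ if and only if some a_i ∈ I with 1 ≤ i ≤ k; and hence h_I satisfies r′ if and only if I is a model of r. -/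
import Mathlib


open scoped Classical

noncomputable section

/-- `C[0,1]`: closed subintervals `[lo, hi]` of `[0,1]`, encoded as pairs of reals. -/
def PInterval : Type := {p : ℝ × ℝ // 0 ≤ p.1 ∧ p.1 ≤ p.2 ∧ p.2 ≤ 1}

/-- The truth order `≤_t` on `C[0,1]`:
`[α₁,β₁] ≤_t [α₂,β₂]` iff `α₁ ≤ α₂` and `β₁ ≤ β₂`. -/
def tle (x y : PInterval) : Prop := x.val.1 ≤ y.val.1 ∧ x.val.2 ≤ y.val.2

/-- The interval `[0,0]`. -/
def zeroI : PInterval := ⟨(0, 0), by norm_num⟩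

/-- The interval `[1,1]`. -/
def oneI : PInterval := ⟨(1, 1), by norm_num⟩

/-- A ground DLP rule `a₁ ∨ … ∨ a_k ← a_{k+1}, …, a_m, not a_{m+1}, …, not a_n`. -/
structure DRule (Atom : Type) where
  head : List Atom
  pos : List Atom
  neg : List Atom

variable {Atom : Type}

/-- `I ⊆ B_L` satisfies the body of a DLP rule `r`:
`{a_{k+1},…,a_m} ⊆ I` and `{a_{m+1},…,a_n} ∩ I = ∅`. -/
def cSatBody (I : Set Atom) (r : DRule Atom) : Prop :=
  (∀ a ∈ r.pos, a ∈ I) ∧ (∀ a ∈ r.neg, a ∉ I)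

/-- `I` is a model of a DLP rule: some head atom is in `I` whenever `I` satisfies
the body. -/
def cModelsRule (I : Set Atom) (r : DRule Atom) : Prop :=
  cSatBody I r → ∃ a ∈ r.head, a ∈ I

/-- A p-interpretation `h` (on atoms) satisfies the body of the DHPP₁^PA translation
`r′` of `r`, in which every atom is annotated with `[1,1]`:
`h` satisfies `a:[1,1]` iff `[1,1] ≤_t h(a)`, and `not a:[1,1]` iff `[1,1] ≰_t h(a)`. -/
def pSatBody (h : Atom → PInterval) (r : DRule Atom) : Prop :=
  (∀ a ∈ r.pos, tle oneI (h a)) ∧ (∀ a ∈ r.neg, ¬ tle oneI (h a))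

/-- `h` satisfies the head of the translation `r′` of `r`: it satisfies `a:[1,1]`
for some head atom `a`. -/
def pSatHead (h : Atom → PInterval) (r : DRule Atom) : Prop :=
  ∃ a ∈ r.head, tle oneI (h a)

/-- `h` satisfies the translated rule `r′`: it satisfies the head whenever it
satisfies the body. -/
def pSatRule (h : Atom → PInterval) (r : DRule Atom) : Prop :=
  pSatBody h r → pSatHead h r

/-- The p-interpretation `h_I` with `h_I(a) = [1,1]` if `a ∈ I` and `h_I(a) = [0,0]`
if `a ∈ B_L \ I`. -/
def hI (I : Set Atom) (a : Atom) : PInterval :=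
  if a ∈ I then oneI else zeroI

lemma tle_hI_iff (I : Set Atom) (a : Atom) : tle oneI (hI I a) ↔ a ∈ I := by
  unfold hI
  by_cases h : a ∈ I <;> simp [h, tle, oneI, zeroI]

/-- Let `r` be a ground DLP rule and `r′` its DHPP₁^PA translation.
Then: `h_I` satisfies the body of `r′` iff `I` satisfies the body of `r`; `h_I`
satisfies the head of `r′` iff some head atom of `r` is in `I`; and hence `h_I`
satisfies `r′` iff `I` is a model of `r`. -/
theorem rule_translation_correct (r : DRule Atom) (I : Set Atom) :
    (pSatBody (hI I) r ↔ cSatBody I r) ∧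
    (pSatHead (hI I) r ↔ ∃ a ∈ r.head, a ∈ I) ∧
    (pSatRule (hI I) r ↔ cModelsRule I r) := by
  constructor
  · unfold pSatBody cSatBody
    simp [tle_hI_iff]
  constructor
  · unfold pSatHead
    simp [tle_hI_iff]
  · unfold pSatRule cModelsRule pSatBody cSatBody pSatHead
    simp [tle_hI_iff]

end
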